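/- Let X, Y, δ be random variables with δ taking values in {0,1}, such that P(δ = 1 | X, Y) = P(δ = 1 | X) (missing at random). Suppose further Y = r(X) + σ₀e where e is independent of X. Then e and δ are conditionally independent given X, and the conditional law of (X, Y) given δ = 1 factors as Q₁ = G₁ ⊗ F, where G₁ is the conditional law of X given δ = 1 and F is the (unconditional) law of σ₀e. -/

import Mathlib

open MeasureTheory ProbabilityTheory

/-!
Since `δ` is `{0,1}`-valued, every indicator `1_{δ ∈ t}` is affine in `δ`, so the MAR hypothesis
gives `E[1_{δ ∈ t} | X, Y] = E[1_{δ ∈ t} | X]`. As `e = (Y - r(X)) / σ₀` is a function of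
`(X, Y)`, pulling `1_{e ∈ s}` out of the `(X, Y)`-conditional expectation and then conditioning
on `X` gives `E[1_{e ∈ s} 1_{δ ∈ t} | X] = E[1_{e ∈ s} | X] E[1_{δ ∈ t} | X]`, i.e. `e ⟂ δ | X`.
Integrating over `{X ∈ A}` and using `e ⟂ X`, for which `E[1_{σ₀e ∈ B} | X] = P(σ₀e ∈ B)`, yields
`P(X ∈ A, σ₀e ∈ B, δ = 1) = P(σ₀e ∈ B) P(X ∈ A, δ = 1)`, the factorization of the law of
`(X, Y - r(X)) = (X, σ₀e)` given `δ = 1`.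
-/

section

variable {Ω : Type*} {mΩ : MeasurableSpace Ω} {μ : Measure Ω} [IsFiniteMeasure μ]

theorem condExp_indicator_inter_eq_mul_of_condExp_congr {m m' : MeasurableSpace Ω}
    (hm : m ≤ m') (hm' : m' ≤ mΩ) {S T : Set Ω} (hS : MeasurableSet[m'] S)
    (hT : MeasurableSet[mΩ] T) (hT' : μ⟦T | m'⟧ =ᵐ[μ] μ⟦T | m⟧) :
    μ⟦S ∩ T | m⟧ =ᵐ[μ] μ⟦S | m⟧ * μ⟦T | m⟧ := by
  have hS_ind : StronglyMeasurable[m'] (S.indicator fun _ => (1 : ℝ)) :=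
    stronglyMeasurable_const.indicator hS
  have hS_mul : ∀ {g : Ω → ℝ}, Integrable g μ → Integrable (S.indicator (fun _ => 1) * g) μ :=
    fun {g} hg => by
      have hSg : S.indicator (fun _ => 1) * g = S.indicator g := by
        funext ω; by_cases h : ω ∈ S <;> simp [h]
      exact hSg ▸ hg.indicator (hm' _ hS)
  have hpull : μ⟦S ∩ T | m'⟧ =ᵐ[μ] S.indicator (fun _ => 1) * μ⟦T | m⟧ := by
    have hST : (S ∩ T).indicator (fun _ => (1 : ℝ)) =
        S.indicator (fun _ => 1) * T.indicator (fun _ => 1) := Set.inter_indicator_one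
    rw [hST]
    filter_upwards [condExp_mul_of_stronglyMeasurable_left hS_ind
      (hS_mul ((integrable_const 1).indicator hT)) ((integrable_const 1).indicator hT), hT']
      with ω h1 h2
    rw [h1, Pi.mul_apply, h2, Pi.mul_apply]
  calc μ⟦S ∩ T | m⟧ =ᵐ[μ] μ[μ⟦S ∩ T | m'⟧ | m] := (condExp_condExp_of_le hm hm').symm
    _ =ᵐ[μ] μ[S.indicator (fun _ => 1) * μ⟦T | m⟧ | m] := condExp_congr_ae hpull
    _ =ᵐ[μ] μ⟦S | m⟧ * μ⟦T | m⟧ :=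
      condExp_mul_of_stronglyMeasurable_right stronglyMeasurable_condExp
        (hS_mul integrable_condExp) ((integrable_const 1).indicator (hm' _ hS))

theorem condExp_comp_congr_of_forall_eq_zero_or_eq_one {m₁ m₂ : MeasurableSpace Ω}
    (hm₁ : m₁ ≤ mΩ) (hm₂ : m₂ ≤ mΩ) {δ : Ω → ℝ} (hδ01 : ∀ ω, δ ω = 0 ∨ δ ω = 1)
    (hδ : Integrable δ μ) (h : μ[δ | m₁] =ᵐ[μ] μ[δ | m₂]) (g : ℝ → ℝ) :
    μ[g ∘ δ | m₁] =ᵐ[μ] μ[g ∘ δ | m₂] := by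
  have hg : g ∘ δ = (fun _ => g 0) + (g 1 - g 0) • δ := by
    funext ω; rcases hδ01 ω with h | h <;> simp [h]
  have hlin : ∀ {m : MeasurableSpace Ω}, m ≤ mΩ →
      μ[g ∘ δ | m] =ᵐ[μ] (fun _ => g 0) + (g 1 - g 0) • μ[δ | m] := fun hm => by
    rw [hg]
    filter_upwards [condExp_add (integrable_const (g 0)) (hδ.smul (g 1 - g 0)) _,
      condExp_smul (g 1 - g 0) δ _] with ω h1 h2
    rw [h1, Pi.add_apply, h2, condExp_const hm]
    rfl
  filter_upwards [hlin hm₁, hlin hm₂, h] with ω h1 h2 h3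
  rw [h1, h2, Pi.add_apply, Pi.add_apply, Pi.smul_apply, Pi.smul_apply, h3]

theorem measure_inter_inter_eq_mul_of_condExp {m : MeasurableSpace Ω} (hm : m ≤ mΩ)
    {A S T : Set Ω} (hA : MeasurableSet[m] A) (hS : MeasurableSet[mΩ] S)
    (hT : MeasurableSet[mΩ] T) (hST : μ⟦S ∩ T | m⟧ =ᵐ[μ] μ⟦S | m⟧ * μ⟦T | m⟧)
    (hS_const : μ⟦S | m⟧ =ᵐ[μ] fun _ => μ.real S) :
    μ (A ∩ S ∩ T) = μ S * μ (A ∩ T) := by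
  have hsetIntegral : ∀ {U : Set Ω}, MeasurableSet[mΩ] U →
      ∫ ω in A, (μ⟦U | m⟧) ω ∂μ = μ.real (A ∩ U) := fun hU => by
    rw [setIntegral_condExp hm ((integrable_const 1).indicator hU) hA,
      setIntegral_indicator hU, setIntegral_const, smul_eq_mul, mul_one]
  have hreal : μ.real (A ∩ (S ∩ T)) = μ.real S * μ.real (A ∩ T) := by
    rw [← hsetIntegral (hS.inter hT), ← hsetIntegral hT, ← integral_const_mul]
    refine integral_congr_ae (ae_restrict_of_ae ?_)
    filter_upwards [hST, hS_const] with ω h1 h2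
    rw [h1, Pi.mul_apply, h2]
  rwa [measureReal_def, measureReal_def, measureReal_def, ← ENNReal.toReal_mul,
    ENNReal.toReal_eq_toReal_iff' (measure_ne_top _ _) (by finiteness), ← Set.inter_assoc] at hreal

theorem map_prodMk_cond_eq_prod {α β : Type*} [MeasurableSpace α] [MeasurableSpace β]
    {X : Ω → α} {Z : Ω → β} (hX : Measurable X) (hZ : Measurable Z) {D : Set Ω}
    (hD : MeasurableSet D) (h : ∀ A B, MeasurableSet A → MeasurableSet B →
      μ (X ⁻¹' A ∩ Z ⁻¹' B ∩ D) = μ (Z ⁻¹' B) * μ (X ⁻¹' A ∩ D)) :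
    (μ[|D]).map (fun ω => (X ω, Z ω)) = ((μ[|D]).map X).prod (μ.map Z) := by
  refine (Measure.prod_eq fun A B hA hB => ?_).symm
  rw [Measure.map_apply (hX.prodMk hZ) (hA.prod hB), Measure.map_apply hX hA,
    Measure.map_apply hZ hB, Set.mk_preimage_prod, cond_apply hD, cond_apply hD,
    Set.inter_comm D, Set.inter_comm D, h A B hA hB]
  ring

theorem ProbabilityTheory.IndepFun.condExp_indicator_preimage_eq {β γ : Type*}
    [MeasurableSpace β] [MeasurableSpace γ] {X : Ω → β} {Z : Ω → γ} (hX : Measurable X)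
    (hZ : Measurable Z) (h : IndepFun X Z μ) {B : Set γ} (hB : MeasurableSet B) :
    μ⟦Z ⁻¹' B | MeasurableSpace.comap X inferInstance⟧ =ᵐ[μ] fun _ => μ.real (Z ⁻¹' B) := by
  refine (condExp_indep_eq hZ.comap_le hX.comap_le
    (stronglyMeasurable_const.indicator ⟨B, hB, rfl⟩) h.symm).trans ?_
  exact ae_of_all _ fun _ => integral_indicator_one (hZ hB)

end

theorem stmt12_general {Ω : Type*} [m0 : MeasurableSpace Ω] [StandardBorelSpace Ω]
    (μ : Measure Ω) [IsProbabilityMeasure μ]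
    (X Y e : Ω → ℝ) (δ : Ω → ℝ)
    (hX : Measurable X) (hY : Measurable Y) (he : Measurable e) (hδ : Measurable δ)
    (hδ01 : ∀ x, δ x = 0 ∨ δ x = 1)
    (hMAR : μ[δ | MeasurableSpace.comap (fun x => (X x, Y x)) inferInstance]
            =ᵐ[μ] μ[δ | MeasurableSpace.comap X inferInstance])
    (r : ℝ → ℝ) (hr : Measurable r) (σ₀ : ℝ) (hσ₀ : 0 < σ₀)
    (hmodel : ∀ x, Y x = r (X x) + σ₀ * e x)
    (hXe : IndepFun X e μ) :
    CondIndepFun (MeasurableSpace.comap X inferInstance) hX.comap_le e δ μ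
    ∧ Measure.map (fun x => (X x, Y x - r (X x))) (μ[|{x | δ x = 1}])
        = (Measure.map X (μ[|{x | δ x = 1}])).prod
            (Measure.map (fun x => σ₀ * e x) μ) := by
  set mXY := MeasurableSpace.comap (fun x => (X x, Y x)) inferInstance
  have hmXY : mXY ≤ m0 := (hX.prodMk hY).comap_le
  have hXY_meas : ∀ {g : ℝ × ℝ → ℝ}, Measurable g → Measurable[mXY] fun x => g (X x, Y x) :=
    fun hg => hg.comp (comap_measurable _)
  have hmX : MeasurableSpace.comap X inferInstance ≤ mXY := (hXY_meas measurable_fst).comap_le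
  have hZ_meas : Measurable[mXY] fun x => σ₀ * e x := by
    simpa only [hmodel, add_sub_cancel_left] using
      hXY_meas (g := fun p => p.2 - r p.1) (measurable_snd.sub (hr.comp measurable_fst))
  have he_meas : Measurable[mXY] e := by
    simpa [← mul_assoc, inv_mul_cancel₀ hσ₀.ne'] using hZ_meas.const_mul σ₀⁻¹
  have hδ_int : Integrable δ μ := Integrable.of_bound hδ.aestronglyMeasurable 1
    (ae_of_all _ fun x => by rcases hδ01 x with h | h <;> simp [h])
  have hcondIndep : ∀ {S t}, MeasurableSet[mXY] S → MeasurableSet t →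
      μ⟦S ∩ δ ⁻¹' t | MeasurableSpace.comap X inferInstance⟧ =ᵐ[μ]
        μ⟦S | MeasurableSpace.comap X inferInstance⟧ *
          μ⟦δ ⁻¹' t | MeasurableSpace.comap X inferInstance⟧ :=
    fun {_ t} hS ht => condExp_indicator_inter_eq_mul_of_condExp_congr hmX hmXY hS (hδ ht)
      (condExp_comp_congr_of_forall_eq_zero_or_eq_one hmXY hX.comap_le hδ01 hδ_int hMAR
        (t.indicator fun _ => 1))
  refine ⟨(condIndepFun_iff_condExp_inter_preimage_eq_mul he hδ).2
    fun s t hs ht => hcondIndep (he_meas hs) ht, ?_⟩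
  simp only [hmodel, add_sub_cancel_left]
  refine map_prodMk_cond_eq_prod hX (he.const_mul σ₀) (hδ (measurableSet_singleton 1))
    fun A B hA hB => measure_inter_inter_eq_mul_of_condExp hX.comap_le ⟨A, hA, rfl⟩
      (he.const_mul σ₀ hB) (hδ (measurableSet_singleton 1))
      (hcondIndep (hZ_meas hB) (measurableSet_singleton 1))
      ((hXe.comp measurable_id (measurable_const_mul σ₀)).condExp_indicator_preimage_eq hX
        (he.const_mul σ₀) hB)

/-- MAR model: if `P(δ = 1 | X, Y) = P(δ = 1 | X)` (missing at random) and
`Y = r(X) + σ₀e` with `e ⟂ X`, then `e` and `δ` are conditionally independent given `X`,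
and the conditional law of `(X, Y − r(X)) = (X, σ₀e)` given `δ = 1` factors as
`Q₁ = G₁ ⊗ F`, where `G₁` is the law of `X` given `δ = 1` and `F` the unconditional law
of `σ₀e`. -/
theorem stmt12 {Ω : Type*} [m0 : MeasurableSpace Ω] [StandardBorelSpace Ω]
    (μ : Measure Ω) [IsProbabilityMeasure μ]
    (X Y e : Ω → ℝ) (δ : Ω → ℝ)
    (hX : Measurable X) (hY : Measurable Y) (he : Measurable e) (hδ : Measurable δ)
    (hδ01 : ∀ x, δ x = 0 ∨ δ x = 1)
    (hpos : μ {x | δ x = 1} ≠ 0)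
    (hMAR : μ[δ | MeasurableSpace.comap (fun x => (X x, Y x)) inferInstance]
            =ᵐ[μ] μ[δ | MeasurableSpace.comap X inferInstance])
    (r : ℝ → ℝ) (hr : Measurable r) (σ₀ : ℝ) (hσ₀ : 0 < σ₀)
    (hmodel : ∀ x, Y x = r (X x) + σ₀ * e x)
    (hXe : IndepFun X e μ) :
    CondIndepFun (MeasurableSpace.comap X inferInstance) hX.comap_le e δ μ
    ∧ Measure.map (fun x => (X x, Y x - r (X x))) (μ[|{x | δ x = 1}])
        = (Measure.map X (μ[|{x | δ x = 1}])).prod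
            (Measure.map (fun x => σ₀ * e x) μ) :=
  stmt12_general (m0 := m0) μ X Y e δ hX hY he hδ hδ01 hMAR r hr σ₀ hσ₀ hmodel hXe
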